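/- arXiv:hep-th/9905190 — 4 statements merged into one kernel-verified Lean document; each statement's English description precedes it below -/
import Mathlib

section
/- Let p be a lightlike vector (p·p = 0, p ≠ 0) and h a complex symmetric 4×4 matrix, traceless with respect to the Minkowski metric, with h_ρ^σ p_σ = 0. Then the quantity conj(h^{μν}) h_{μν} is real and nonnegative. -/
open Matrix
noncomputable section

def gM : Matrix (Fin 4) (Fin 4) ℂ := Matrix.diagonal ![1,-1,-1,-1]

def pc (p : Fin 4 → ℝ) : Fin 4 → ℂ := fun i => (p i : ℂ)

def minkR (p q : Fin 4 → ℝ) : ℝ := p 0 * q 0 - p 1 * q 1 - p 2 * q 2 - p 3 * q 3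

def IsTraceless (h : Matrix (Fin 4) (Fin 4) ℂ) : Prop :=
  ∑ ρ, ∑ σ, gM ρ σ * h ρ σ = 0

def IsTransverse (p : Fin 4 → ℝ) (h : Matrix (Fin 4) (Fin 4) ℂ) : Prop :=
  ∀ ρ, ∑ σ, ∑ l, h ρ σ * gM σ l * pc p l = 0

def raise (h : Matrix (Fin 4) (Fin 4) ℂ) : Matrix (Fin 4) (Fin 4) ℂ := gM * h * gM

def pnorm (h : Matrix (Fin 4) (Fin 4) ℂ) : ℂ := ∑ μ, ∑ ν, star (raise h μ ν) * h μ ν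

lemma key_id (A B C D E F A' B' C' D' E' F' u1 u2 u3 V1 V2 V3 W1 W2 W3 c c' : ℂ)
    (hu : u1^2 + u2^2 + u3^2 = 1)
    (hV1 : V1 = A*u1 + B*u2 + C*u3) (hV2 : V2 = B*u1 + D*u2 + E*u3) (hV3 : V3 = C*u1 + E*u2 + F*u3)
    (hW1 : W1 = A'*u1 + B'*u2 + C'*u3) (hW2 : W2 = B'*u1 + D'*u2 + E'*u3) (hW3 : W3 = C'*u1 + E'*u2 + F'*u3)
    (hc : c = V1*u1 + V2*u2 + V3*u3) (hc' : c' = W1*u1 + W2*u2 + W3*u3) :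
    c'*c - 2*(W1*V1 + W2*V2 + W3*V3)
      + (A'*A + 2*(B'*B) + 2*(C'*C) + D'*D + 2*(E'*E) + F'*F)
    = (A' - 2*u1*W1 + c'*u1^2) * (A - 2*u1*V1 + c*u1^2)
      + 2*((B' - u1*W2 - u2*W1 + c'*u1*u2) * (B - u1*V2 - u2*V1 + c*u1*u2))
      + 2*((C' - u1*W3 - u3*W1 + c'*u1*u3) * (C - u1*V3 - u3*V1 + c*u1*u3))
      + (D' - 2*u2*W2 + c'*u2^2) * (D - 2*u2*V2 + c*u2^2)
      + 2*((E' - u2*W3 - u3*W2 + c'*u2*u3) * (E - u2*V3 - u3*V2 + c*u2*u3))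
      + (F' - 2*u3*W3 + c'*u3^2) * (F - 2*u3*V3 + c*u3^2) := by
  subst hV1 hV2 hV3 hW1 hW2 hW3 hc hc'
  linear_combination (-2*((A'*u1 + B'*u2 + C'*u3)*(A*u1 + B*u2 + C*u3)
     + (B'*u1 + D'*u2 + E'*u3)*(B*u1 + D*u2 + E*u3)
     + (C'*u1 + E'*u2 + F'*u3)*(C*u1 + E*u2 + F*u3))
    + (3 - (u1^2 + u2^2 + u3^2)) *
      (((A'*u1 + B'*u2 + C'*u3)*u1 + (B'*u1 + D'*u2 + E'*u3)*u2 + (C'*u1 + E'*u2 + F'*u3)*u3) *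
       ((A*u1 + B*u2 + C*u3)*u1 + (B*u1 + D*u2 + E*u3)*u2 + (C*u1 + E*u2 + F*u3)*u3))) * hu

/-- For `p` lightlike nonzero and `h` symmetric, Minkowski-traceless and transverse
to `p`, the quantity `conj(h^{μν}) h_{μν}` is real and nonnegative. -/
theorem statement3 (p : Fin 4 → ℝ) (hp : minkR p p = 0) (hpne : p ≠ 0)
    (h : Matrix (Fin 4) (Fin 4) ℂ) (hsymm : h.IsSymm)
    (htr : IsTraceless h) (htrans : IsTransverse p h) :
    (pnorm h).im = 0 ∧ 0 ≤ (pnorm h).re := by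
  unfold minkR at hp
  -- p 0 ≠ 0
  have hp0 : p 0 ≠ 0 := by
    intro h0
    apply hpne
    funext i
    have h1 : p 1 = 0 := by nlinarith [sq_nonneg (p 1), sq_nonneg (p 2), sq_nonneg (p 3)]
    have h2 : p 2 = 0 := by nlinarith [sq_nonneg (p 1), sq_nonneg (p 2), sq_nonneg (p 3)]
    have h3 : p 3 = 0 := by nlinarith [sq_nonneg (p 1), sq_nonneg (p 2), sq_nonneg (p 3)]
    fin_cases i <;> simp [h0, h1, h2, h3]
  have hP0 : (p 0 : ℂ) ≠ 0 := by exact_mod_cast hp0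
  set U1 : ℂ := (p 1 : ℂ) / (p 0 : ℂ) with hU1def
  set U2 : ℂ := (p 2 : ℂ) / (p 0 : ℂ) with hU2def
  set U3 : ℂ := (p 3 : ℂ) / (p 0 : ℂ) with hU3def
  have hu : U1^2 + U2^2 + U3^2 = 1 := by
    rw [hU1def, hU2def, hU3def]
    field_simp
    have : (p 1:ℝ)^2 + (p 2:ℝ)^2 + (p 3:ℝ)^2 = (p 0:ℝ)^2 := by nlinarith [hp]
    exact_mod_cast this
  have hsU1 : star U1 = U1 := by simp [hU1def]
  have hsU2 : star U2 = U2 := by simp [hU2def]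
  have hsU3 : star U3 = U3 := by simp [hU3def]
  -- transversality in divided form
  have htr' : ∀ ρ, h ρ 0 = h ρ 1 * U1 + h ρ 2 * U2 + h ρ 3 * U3 := by
    intro ρ
    have hT := htrans ρ
    simp [gM, pc, Fin.sum_univ_four, Matrix.diagonal] at hT
    rw [hU1def, hU2def, hU3def]
    field_simp
    linear_combination hT
  set V1 : ℂ := h 1 1 * U1 + h 1 2 * U2 + h 1 3 * U3 with hV1
  set V2 : ℂ := h 1 2 * U1 + h 2 2 * U2 + h 2 3 * U3 with hV2
  set V3 : ℂ := h 1 3 * U1 + h 2 3 * U2 + h 3 3 * U3 with hV3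
  set c : ℂ := V1*U1 + V2*U2 + V3*U3 with hc
  have e10 : h 1 0 = V1 := htr' 1
  have e20 : h 2 0 = V2 := by
    rw [htr' 2, hV2, hsymm.apply 1 2]
  have e30 : h 3 0 = V3 := by
    rw [htr' 3, hV3, hsymm.apply 1 3, hsymm.apply 2 3]
  have e01 : h 0 1 = V1 := by rw [← hsymm.apply 0 1]; exact e10
  have e02 : h 0 2 = V2 := by rw [← hsymm.apply 0 2]; exact e20
  have e03 : h 0 3 = V3 := by rw [← hsymm.apply 0 3]; exact e30
  have e00 : h 0 0 = c := by
    rw [htr' 0, e01, e02, e03, hc]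
  have hW1 : star V1 = star (h 1 1) * U1 + star (h 1 2) * U2 + star (h 1 3) * U3 := by
    rw [hV1]; simp [hsU1, hsU2, hsU3]
  have hW2 : star V2 = star (h 1 2) * U1 + star (h 2 2) * U2 + star (h 2 3) * U3 := by
    rw [hV2]; simp [hsU1, hsU2, hsU3]
  have hW3 : star V3 = star (h 1 3) * U1 + star (h 2 3) * U2 + star (h 3 3) * U3 := by
    rw [hV3]; simp [hsU1, hsU2, hsU3]
  have hc' : star c = star V1 * U1 + star V2 * U2 + star V3 * U3 := by
    rw [hc]; simp [hsU1, hsU2, hsU3]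
  -- expand pnorm
  have hpn : pnorm h = star c * c - 2*(star V1 * V1 + star V2 * V2 + star V3 * V3)
      + (star (h 1 1) * h 1 1 + 2*(star (h 1 2) * h 1 2) + 2*(star (h 1 3) * h 1 3)
        + star (h 2 2) * h 2 2 + 2*(star (h 2 3) * h 2 3) + star (h 3 3) * h 3 3) := by
    have hexp : pnorm h = star (h 0 0) * h 0 0 - star (h 0 1) * h 0 1 - star (h 0 2) * h 0 2 - star (h 0 3) * h 0 3
      - star (h 1 0) * h 1 0 + star (h 1 1) * h 1 1 + star (h 1 2) * h 1 2 + star (h 1 3) * h 1 3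
      - star (h 2 0) * h 2 0 + star (h 2 1) * h 2 1 + star (h 2 2) * h 2 2 + star (h 2 3) * h 2 3
      - star (h 3 0) * h 3 0 + star (h 3 1) * h 3 1 + star (h 3 2) * h 3 2 + star (h 3 3) * h 3 3 := by
      simp only [pnorm, raise, gM, Matrix.mul_apply, Fin.sum_univ_four]
      simp [Matrix.diagonal]
      ring
    rw [hexp, e00, e01, e02, e03, e10, e20, e30, hsymm.apply 1 2, hsymm.apply 1 3, hsymm.apply 2 3]
    ring
  set M11 := h 1 1 - 2*U1*V1 + c*U1^2 with hM11
  set M12 := h 1 2 - U1*V2 - U2*V1 + c*U1*U2 with hM12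
  set M13 := h 1 3 - U1*V3 - U3*V1 + c*U1*U3 with hM13
  set M22 := h 2 2 - 2*U2*V2 + c*U2^2 with hM22
  set M23 := h 2 3 - U2*V3 - U3*V2 + c*U2*U3 with hM23
  set M33 := h 3 3 - 2*U3*V3 + c*U3^2 with hM33
  have hkey := key_id (h 1 1) (h 1 2) (h 1 3) (h 2 2) (h 2 3) (h 3 3)
    (star (h 1 1)) (star (h 1 2)) (star (h 1 3)) (star (h 2 2)) (star (h 2 3)) (star (h 3 3))
    U1 U2 U3 V1 V2 V3 (star V1) (star V2) (star V3) c (star c)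
    hu hV1 hV2 hV3 hW1 hW2 hW3 hc hc'
  have hsM11 : star M11 = star (h 1 1) - 2*U1*star V1 + star c*U1^2 := by
    rw [hM11]; simp [hsU1]
  have hsM12 : star M12 = star (h 1 2) - U1*star V2 - U2*star V1 + star c*U1*U2 := by
    rw [hM12]; simp [hsU1, hsU2]
  have hsM13 : star M13 = star (h 1 3) - U1*star V3 - U3*star V1 + star c*U1*U3 := by
    rw [hM13]; simp [hsU1, hsU3]
  have hsM23 : star M23 = star (h 2 3) - U2*star V3 - U3*star V2 + star c*U2*U3 := by
    rw [hM23]; simp [hsU2, hsU3]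
  have hsM22 : star M22 = star (h 2 2) - 2*U2*star V2 + star c*U2^2 := by
    rw [hM22]; simp [hsU2]
  have hsM33 : star M33 = star (h 3 3) - 2*U3*star V3 + star c*U3^2 := by
    rw [hM33]; simp [hsU3]
  have hfin : pnorm h = star M11 * M11 + 2*(star M12 * M12) + 2*(star M13 * M13)
      + star M22 * M22 + 2*(star M23 * M23) + star M33 * M33 := by
    rw [hpn, hM11, hM12, hM13, hM22, hM23, hM33, hsM11, hsM12, hsM13, hsM22, hsM23, hsM33]
    linear_combination hkey
  have hreal : pnorm h = ((Complex.normSq M11 + 2*Complex.normSq M12 + 2*Complex.normSq M13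
      + Complex.normSq M22 + 2*Complex.normSq M23 + Complex.normSq M33 : ℝ) : ℂ) := by
    rw [hfin]
    push_cast
    rw [Complex.normSq_eq_conj_mul_self, Complex.normSq_eq_conj_mul_self,
      Complex.normSq_eq_conj_mul_self, Complex.normSq_eq_conj_mul_self,
      Complex.normSq_eq_conj_mul_self, Complex.normSq_eq_conj_mul_self]
    rfl
  rw [hreal]
  constructor
  · simp
  · simp only [Complex.ofReal_re]
    have n1 := Complex.normSq_nonneg M11
    have n2 := Complex.normSq_nonneg M12
    have n3 := Complex.normSq_nonneg M13
    have n4 := Complex.normSq_nonneg M22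
    have n5 := Complex.normSq_nonneg M23
    have n6 := Complex.normSq_nonneg M33
    linarith
end
end

section
/- Let p be a lightlike vector (p·p = 0, p₀ > 0) and h a complex symmetric 4×4 matrix with g^{ρσ}h_{ρσ} = 0 and h_ρ^σ p_σ = 0. Then conj(h^{μν}) h_{μν} = 0 if and only if there exists f ∈ ℂ⁴ with p^ρ f_ρ = 0 such that h_{ρσ} = p_ρ f_σ + p_σ f_ρ. -/
open Matrix
noncomputable section

set_option maxHeartbeats 1000000 in
/-- For `p` lightlike future-pointing and `h` symmetric, Minkowski-traceless and
transverse to `p`: the pseudo-norm vanishes iff `h_{ρσ} = p_ρ f_σ + p_σ f_ρ` for some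
`f ∈ ℂ⁴` with `p^ρ f_ρ = 0`. -/
theorem statement4 (p : Fin 4 → ℝ) (hp : minkR p p = 0) (hp0 : 0 < p 0)
    (h : Matrix (Fin 4) (Fin 4) ℂ) (hsymm : h.IsSymm)
    (htr : IsTraceless h) (htrans : IsTransverse p h) :
    pnorm h = 0 ↔
      ∃ f : Fin 4 → ℂ, (∑ ρ, ∑ σ, gM ρ σ * pc p σ * f ρ) = 0 ∧
        ∀ ρ σ, h ρ σ = pc p ρ * f σ + pc p σ * f ρ := by
  have hP0 : (p 0 : ℂ) ≠ 0 := by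
    exact_mod_cast ne_of_gt hp0
  have hq : (p 0:ℂ)*(p 0:ℂ) = (p 1:ℂ)*(p 1:ℂ) + (p 2:ℂ)*(p 2:ℂ) + (p 3:ℂ)*(p 3:ℂ) := by
    have h1 : p 0 * p 0 = p 1 * p 1 + p 2 * p 2 + p 3 * p 3 := by
      unfold minkR at hp; linarith
    exact_mod_cast h1
  have hs : ∀ i j, h i j = h j i := fun i j => hsymm.apply j i
  have hpn0 : pnorm h = (starRingEnd ℂ) (h 0 0) * h 0 0 - (starRingEnd ℂ) (h 0 1) * h 0 1 - (starRingEnd ℂ) (h 0 2) * h 0 2 - (starRingEnd ℂ) (h 0 3) * h 0 3 - (starRingEnd ℂ) (h 1 0) * h 1 0 + (starRingEnd ℂ) (h 1 1) * h 1 1 + (starRingEnd ℂ) (h 1 2) * h 1 2 + (starRingEnd ℂ) (h 1 3) * h 1 3 - (starRingEnd ℂ) (h 2 0) * h 2 0 + (starRingEnd ℂ) (h 2 1) * h 2 1 + (starRingEnd ℂ) (h 2 2) * h 2 2 + (starRingEnd ℂ) (h 2 3) * h 2 3 - (starRingEnd ℂ) (h 3 0) * h 3 0 + (starRingEnd ℂ)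 (h 3 1) * h 3 1 + (starRingEnd ℂ) (h 3 2) * h 3 2 + (starRingEnd ℂ) (h 3 3) * h 3 3 := by
    simp [pnorm, raise, gM, Matrix.mul_apply, Fin.sum_univ_four, Matrix.diagonal, Complex.star_def]
    ring
  have t0 : (p 0:ℂ) * h 0 0 = (p 1:ℂ)*h 0 1 + (p 2:ℂ)*h 0 2 + (p 3:ℂ)*h 0 3 := by
    have w := htrans 0
    simp [gM, pc, Fin.sum_univ_four, Matrix.diagonal] at w
    linear_combination w
  have t1 : (p 0:ℂ) * h 0 1 = (p 1:ℂ)*h 1 1 + (p 2:ℂ)*h 1 2 + (p 3:ℂ)*h 1 3 := by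
    have w := htrans 1
    simp [gM, pc, Fin.sum_univ_four, Matrix.diagonal] at w
    rw [hs 1 0] at w
    linear_combination w
  have t2 : (p 0:ℂ) * h 0 2 = (p 1:ℂ)*h 1 2 + (p 2:ℂ)*h 2 2 + (p 3:ℂ)*h 2 3 := by
    have w := htrans 2
    simp [gM, pc, Fin.sum_univ_four, Matrix.diagonal] at w
    rw [hs 2 0] at w
    rw [hs 2 1] at w
    linear_combination w
  have t3 : (p 0:ℂ) * h 0 3 = (p 1:ℂ)*h 1 3 + (p 2:ℂ)*h 2 3 + (p 3:ℂ)*h 3 3 := by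
    have w := htrans 3
    simp [gM, pc, Fin.sum_univ_four, Matrix.diagonal] at w
    rw [hs 3 0] at w
    rw [hs 3 1] at w
    rw [hs 3 2] at w
    linear_combination w
  have st0 := congrArg (starRingEnd ℂ) t0
  simp only [map_add, _root_.map_mul, Complex.conj_ofReal] at st0
  have st1 := congrArg (starRingEnd ℂ) t1
  simp only [map_add, _root_.map_mul, Complex.conj_ofReal] at st1
  have st2 := congrArg (starRingEnd ℂ) t2
  simp only [map_add, _root_.map_mul, Complex.conj_ofReal] at st2
  have st3 := congrArg (starRingEnd ℂ) t3
  simp only [map_add, _root_.map_mul, Complex.conj_ofReal] at st3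
  constructor
  · intro hz
    have key : (p 0:ℂ)^4 * pnorm h = ((p 0:ℂ)^2*(starRingEnd ℂ) (h 1 1) - (p 1:ℂ)*(p 0:ℂ)*(starRingEnd ℂ) (h 0 1) - (p 1:ℂ)*(p 0:ℂ)*(starRingEnd ℂ) (h 0 1) + (p 1:ℂ)*(p 1:ℂ)*(starRingEnd ℂ) (h 0 0)) * ((p 0:ℂ)^2*h 1 1 - (p 1:ℂ)*(p 0:ℂ)*h 0 1 - (p 1:ℂ)*(p 0:ℂ)*h 0 1 + (p 1:ℂ)*(p 1:ℂ)*h 0 0) + 2*((p 0:ℂ)^2*(starRingEnd ℂ) (h 1 2) - (p 1:ℂ)*(p 0:ℂ)*(starRingEnd ℂ) (h 0 2) - (p 2:ℂ)*(p 0:ℂ)*(starRingEnd ℂ) (h 0 1) + (p 1:ℂ)*(p 2:ℂ)*(starRingEnd ℂ) (h 0 0)) * ((p 0:ℂ)^2*h 1 2 - (p 1:ℂ)*(p 0:ℂ)*h 0 2 - (p 2:ℂ)*(p 0:ℂ)*h 0 1 + (p 1:ℂ)*(p 2:ℂ)*h 0 0) + 2*((p 0:ℂ)^2*(starRingEnd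 ℂ) (h 1 3) - (p 1:ℂ)*(p 0:ℂ)*(starRingEnd ℂ) (h 0 3) - (p 3:ℂ)*(p 0:ℂ)*(starRingEnd ℂ) (h 0 1) + (p 1:ℂ)*(p 3:ℂ)*(starRingEnd ℂ) (h 0 0)) * ((p 0:ℂ)^2*h 1 3 - (p 1:ℂ)*(p 0:ℂ)*h 0 3 - (p 3:ℂ)*(p 0:ℂ)*h 0 1 + (p 1:ℂ)*(p 3:ℂ)*h 0 0) + ((p 0:ℂ)^2*(starRingEnd ℂ) (h 2 2) - (p 2:ℂ)*(p 0:ℂ)*(starRingEnd ℂ) (h 0 2) - (p 2:ℂ)*(p 0:ℂ)*(starRingEnd ℂ) (h 0 2) + (p 2:ℂ)*(p 2:ℂ)*(starRingEnd ℂ) (h 0 0)) * ((p 0:ℂ)^2*h 2 2 - (p 2:ℂ)*(p 0:ℂ)*h 0 2 - (p 2:ℂ)*(p 0:ℂ)*h 0 2 + (p 2:ℂ)*(p 2:ℂ)*h 0 0) + 2*((p 0:ℂ)^2*(starRingEnd ℂ) (h 2 3) - (p 2:ℂ)*(p 0:ℂ)*(starRingEnd ℂ) (h 0 3) - (p 3:ℂ)*(p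 0:ℂ)*(starRingEnd ℂ) (h 0 2) + (p 2:ℂ)*(p 3:ℂ)*(starRingEnd ℂ) (h 0 0)) * ((p 0:ℂ)^2*h 2 3 - (p 2:ℂ)*(p 0:ℂ)*h 0 3 - (p 3:ℂ)*(p 0:ℂ)*h 0 2 + (p 2:ℂ)*(p 3:ℂ)*h 0 0) + ((p 0:ℂ)^2*(starRingEnd ℂ) (h 3 3) - (p 3:ℂ)*(p 0:ℂ)*(starRingEnd ℂ) (h 0 3) - (p 3:ℂ)*(p 0:ℂ)*(starRingEnd ℂ) (h 0 3) + (p 3:ℂ)*(p 3:ℂ)*(starRingEnd ℂ) (h 0 0)) * ((p 0:ℂ)^2*h 3 3 - (p 3:ℂ)*(p 0:ℂ)*h 0 3 - (p 3:ℂ)*(p 0:ℂ)*h 0 3 + (p 3:ℂ)*(p 3:ℂ)*h 0 0) := by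
      rw [hpn0, hs 1 0, hs 2 0, hs 2 1, hs 3 0, hs 3 1, hs 3 2]
      linear_combination ((-1)*(p 0:ℂ)*(p 1:ℂ)*(p 1:ℂ)*(starRingEnd ℂ) (h 1 1) + (-2)*(p 0:ℂ)*(p 1:ℂ)*(p 2:ℂ)*(starRingEnd ℂ) (h 1 2) + (-2)*(p 0:ℂ)*(p 1:ℂ)*(p 3:ℂ)*(starRingEnd ℂ) (h 1 3) + (-1)*(p 0:ℂ)*(p 2:ℂ)*(p 2:ℂ)*(starRingEnd ℂ) (h 2 2) + (-2)*(p 0:ℂ)*(p 2:ℂ)*(p 3:ℂ)*(starRingEnd ℂ) (h 2 3) + (-1)*(p 0:ℂ)*(p 3:ℂ)*(p 3:ℂ)*(starRingEnd ℂ) (h 3 3) + (2)*(p 1:ℂ)*(p 1:ℂ)*(p 1:ℂ)*(starRingEnd ℂ) (h 0 1) + (2)*(p 1:ℂ)*(p 1:ℂ)*(p 2:ℂ)*(starRingEnd ℂ) (h 0 2) + (2)*(p 1:ℂ)*(p 1:ℂ)*(p 3:ℂ)*(starRingEnd ℂ) (h 0 3) + (2)*(p 1:ℂ)*(p 2:ℂ)*(p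 2:ℂ)*(starRingEnd ℂ) (h 0 1) + (2)*(p 1:ℂ)*(p 3:ℂ)*(p 3:ℂ)*(starRingEnd ℂ) (h 0 1) + (2)*(p 2:ℂ)*(p 2:ℂ)*(p 2:ℂ)*(starRingEnd ℂ) (h 0 2) + (2)*(p 2:ℂ)*(p 2:ℂ)*(p 3:ℂ)*(starRingEnd ℂ) (h 0 3) + (2)*(p 2:ℂ)*(p 3:ℂ)*(p 3:ℂ)*(starRingEnd ℂ) (h 0 2) + (2)*(p 3:ℂ)*(p 3:ℂ)*(p 3:ℂ)*(starRingEnd ℂ) (h 0 3)) * t0 + ((2)*h 0 1*(p 1:ℂ)*(p 1:ℂ)*(p 1:ℂ) + (2)*h 0 1*(p 1:ℂ)*(p 2:ℂ)*(p 2:ℂ) + (2)*h 0 1*(p 1:ℂ)*(p 3:ℂ)*(p 3:ℂ) + (2)*h 0 2*(p 1:ℂ)*(p 1:ℂ)*(p 2:ℂ) + (2)*h 0 2*(p 2:ℂ)*(p 2:ℂ)*(p 2:ℂ) + (2)*h 0 2*(p 2:ℂ)*(p 3:ℂ)*(p 3:ℂ) + (2)*h 0 3*(p 1:ℂ)*(p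 1:ℂ)*(p 3:ℂ) + (2)*h 0 3*(p 2:ℂ)*(p 2:ℂ)*(p 3:ℂ) + (2)*h 0 3*(p 3:ℂ)*(p 3:ℂ)*(p 3:ℂ) + (-1)*h 1 1*(p 0:ℂ)*(p 1:ℂ)*(p 1:ℂ) + (-2)*h 1 2*(p 0:ℂ)*(p 1:ℂ)*(p 2:ℂ) + (-2)*h 1 3*(p 0:ℂ)*(p 1:ℂ)*(p 3:ℂ) + (-1)*h 2 2*(p 0:ℂ)*(p 2:ℂ)*(p 2:ℂ) + (-2)*h 2 3*(p 0:ℂ)*(p 2:ℂ)*(p 3:ℂ) + (-1)*h 3 3*(p 0:ℂ)*(p 3:ℂ)*(p 3:ℂ)) * st0 + ((2)*(p 0:ℂ)*(p 0:ℂ)*(p 0:ℂ)*(starRingEnd ℂ) (h 0 1) + (2)*(p 0:ℂ)*(p 0:ℂ)*(p 1:ℂ)*(starRingEnd ℂ) (h 1 1) + (2)*(p 0:ℂ)*(p 0:ℂ)*(p 2:ℂ)*(starRingEnd ℂ) (h 1 2) + (2)*(p 0:ℂ)*(p 0:ℂ)*(p 3:ℂ)*(starRingEnd ℂ) (h 1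 3) + (-4)*(p 0:ℂ)*(p 1:ℂ)*(p 1:ℂ)*(starRingEnd ℂ) (h 0 1) + (2)*(p 0:ℂ)*(p 1:ℂ)*(p 2:ℂ)*(starRingEnd ℂ) (h 0 2) + (2)*(p 0:ℂ)*(p 1:ℂ)*(p 3:ℂ)*(starRingEnd ℂ) (h 0 3) + (-6)*(p 0:ℂ)*(p 2:ℂ)*(p 2:ℂ)*(starRingEnd ℂ) (h 0 1) + (-6)*(p 0:ℂ)*(p 3:ℂ)*(p 3:ℂ)*(starRingEnd ℂ) (h 0 1) + (-1)*(p 1:ℂ)*(p 1:ℂ)*(p 1:ℂ)*(starRingEnd ℂ) (h 1 1) + (-2)*(p 1:ℂ)*(p 1:ℂ)*(p 2:ℂ)*(starRingEnd ℂ) (h 1 2) + (-2)*(p 1:ℂ)*(p 1:ℂ)*(p 3:ℂ)*(starRingEnd ℂ) (h 1 3) + (-1)*(p 1:ℂ)*(p 2:ℂ)*(p 2:ℂ)*(starRingEnd ℂ) (h 2 2) + (-2)*(p 1:ℂ)*(p 2:ℂ)*(p 3:ℂ)*(starRingEnd ℂ) (h 2 3) + (-1)*(p 1:ℂ)*(p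 3:ℂ)*(p 3:ℂ)*(starRingEnd ℂ) (h 3 3)) * t1 + ((2)*h 0 2*(p 0:ℂ)*(p 1:ℂ)*(p 2:ℂ) + (2)*h 0 3*(p 0:ℂ)*(p 1:ℂ)*(p 3:ℂ) + (4)*h 1 1*(p 0:ℂ)*(p 0:ℂ)*(p 1:ℂ) + (-5)*h 1 1*(p 1:ℂ)*(p 1:ℂ)*(p 1:ℂ) + (-6)*h 1 1*(p 1:ℂ)*(p 2:ℂ)*(p 2:ℂ) + (-6)*h 1 1*(p 1:ℂ)*(p 3:ℂ)*(p 3:ℂ) + (4)*h 1 2*(p 0:ℂ)*(p 0:ℂ)*(p 2:ℂ) + (-6)*h 1 2*(p 1:ℂ)*(p 1:ℂ)*(p 2:ℂ) + (-6)*h 1 2*(p 2:ℂ)*(p 2:ℂ)*(p 2:ℂ) + (-6)*h 1 2*(p 2:ℂ)*(p 3:ℂ)*(p 3:ℂ) + (4)*h 1 3*(p 0:ℂ)*(p 0:ℂ)*(p 3:ℂ) + (-6)*h 1 3*(p 1:ℂ)*(p 1:ℂ)*(p 3:ℂ) + (-6)*h 1 3*(p 2:ℂ)*(p 2:ℂ)*(p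 3:ℂ) + (-6)*h 1 3*(p 3:ℂ)*(p 3:ℂ)*(p 3:ℂ) + (-1)*h 2 2*(p 1:ℂ)*(p 2:ℂ)*(p 2:ℂ) + (-2)*h 2 3*(p 1:ℂ)*(p 2:ℂ)*(p 3:ℂ) + (-1)*h 3 3*(p 1:ℂ)*(p 3:ℂ)*(p 3:ℂ)) * st1 + ((-2)*(p 0:ℂ)*(p 0:ℂ)*(p 0:ℂ)*(starRingEnd ℂ) (h 0 2) + (2)*(p 0:ℂ)*(p 0:ℂ)*(p 1:ℂ)*(starRingEnd ℂ) (h 1 2) + (2)*(p 0:ℂ)*(p 0:ℂ)*(p 2:ℂ)*(starRingEnd ℂ) (h 2 2) + (2)*(p 0:ℂ)*(p 0:ℂ)*(p 3:ℂ)*(starRingEnd ℂ) (h 2 3) + (-2)*(p 0:ℂ)*(p 1:ℂ)*(p 1:ℂ)*(starRingEnd ℂ) (h 0 2) + (2)*(p 0:ℂ)*(p 2:ℂ)*(p 3:ℂ)*(starRingEnd ℂ) (h 0 3) + (-2)*(p 0:ℂ)*(p 3:ℂ)*(p 3:ℂ)*(starRingEnd ℂ) (h 0 2) + (1)*(p 1:ℂ)*(p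 1:ℂ)*(p 2:ℂ)*(starRingEnd ℂ) (h 1 1) + (-1)*(p 2:ℂ)*(p 2:ℂ)*(p 2:ℂ)*(starRingEnd ℂ) (h 2 2) + (-2)*(p 2:ℂ)*(p 2:ℂ)*(p 3:ℂ)*(starRingEnd ℂ) (h 2 3) + (-1)*(p 2:ℂ)*(p 3:ℂ)*(p 3:ℂ)*(starRingEnd ℂ) (h 3 3)) * t2 + ((2)*h 0 3*(p 0:ℂ)*(p 2:ℂ)*(p 3:ℂ) + (1)*h 1 1*(p 1:ℂ)*(p 1:ℂ)*(p 2:ℂ) + (-2)*h 1 2*(p 1:ℂ)*(p 1:ℂ)*(p 1:ℂ) + (-2)*h 1 2*(p 1:ℂ)*(p 3:ℂ)*(p 3:ℂ) + (-2)*h 2 2*(p 1:ℂ)*(p 1:ℂ)*(p 2:ℂ) + (-1)*h 2 2*(p 2:ℂ)*(p 2:ℂ)*(p 2:ℂ) + (-2)*h 2 2*(p 2:ℂ)*(p 3:ℂ)*(p 3:ℂ) + (-2)*h 2 3*(p 1:ℂ)*(p 1:ℂ)*(p 3:ℂ) + (-2)*h 2 3*(p 2:ℂ)*(p 2:ℂ)*(p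 3:ℂ) + (-2)*h 2 3*(p 3:ℂ)*(p 3:ℂ)*(p 3:ℂ) + (-1)*h 3 3*(p 2:ℂ)*(p 3:ℂ)*(p 3:ℂ)) * st2 + ((-2)*(p 0:ℂ)*(p 0:ℂ)*(p 0:ℂ)*(starRingEnd ℂ) (h 0 3) + (2)*(p 0:ℂ)*(p 0:ℂ)*(p 1:ℂ)*(starRingEnd ℂ) (h 1 3) + (2)*(p 0:ℂ)*(p 0:ℂ)*(p 2:ℂ)*(starRingEnd ℂ) (h 2 3) + (2)*(p 0:ℂ)*(p 0:ℂ)*(p 3:ℂ)*(starRingEnd ℂ) (h 3 3) + (-2)*(p 0:ℂ)*(p 1:ℂ)*(p 1:ℂ)*(starRingEnd ℂ) (h 0 3) + (-2)*(p 0:ℂ)*(p 2:ℂ)*(p 2:ℂ)*(starRingEnd ℂ) (h 0 3) + (1)*(p 1:ℂ)*(p 1:ℂ)*(p 3:ℂ)*(starRingEnd ℂ) (h 1 1) + (2)*(p 1:ℂ)*(p 2:ℂ)*(p 3:ℂ)*(starRingEnd ℂ) (h 1 2) + (1)*(p 2:ℂ)*(p 2:ℂ)*(p 3:ℂ)*(starRingEnd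 ℂ) (h 2 2) + (-1)*(p 3:ℂ)*(p 3:ℂ)*(p 3:ℂ)*(starRingEnd ℂ) (h 3 3)) * t3 + ((1)*h 1 1*(p 1:ℂ)*(p 1:ℂ)*(p 3:ℂ) + (2)*h 1 2*(p 1:ℂ)*(p 2:ℂ)*(p 3:ℂ) + (-2)*h 1 3*(p 1:ℂ)*(p 1:ℂ)*(p 1:ℂ) + (-2)*h 1 3*(p 1:ℂ)*(p 2:ℂ)*(p 2:ℂ) + (1)*h 2 2*(p 2:ℂ)*(p 2:ℂ)*(p 3:ℂ) + (-2)*h 2 3*(p 1:ℂ)*(p 1:ℂ)*(p 2:ℂ) + (-2)*h 2 3*(p 2:ℂ)*(p 2:ℂ)*(p 2:ℂ) + (-2)*h 3 3*(p 1:ℂ)*(p 1:ℂ)*(p 3:ℂ) + (-2)*h 3 3*(p 2:ℂ)*(p 2:ℂ)*(p 3:ℂ) + (-1)*h 3 3*(p 3:ℂ)*(p 3:ℂ)*(p 3:ℂ)) * st3 + ((1)*h 0 0*(p 0:ℂ)*(p 0:ℂ)*(starRingEnd ℂ) (h 0 0) + (1)*h 0 0*(p 1:ℂ)*(p 1:ℂ)*(starRingEnd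 ℂ) (h 0 0) + (1)*h 0 0*(p 2:ℂ)*(p 2:ℂ)*(starRingEnd ℂ) (h 0 0) + (1)*h 0 0*(p 3:ℂ)*(p 3:ℂ)*(starRingEnd ℂ) (h 0 0) + (-4)*h 0 1*(p 0:ℂ)*(p 0:ℂ)*(starRingEnd ℂ) (h 0 1) + (-4)*h 0 1*(p 1:ℂ)*(p 1:ℂ)*(starRingEnd ℂ) (h 0 1) + (-4)*h 0 1*(p 1:ℂ)*(p 2:ℂ)*(starRingEnd ℂ) (h 0 2) + (-4)*h 0 1*(p 1:ℂ)*(p 3:ℂ)*(starRingEnd ℂ) (h 0 3) + (-4)*h 0 2*(p 1:ℂ)*(p 2:ℂ)*(starRingEnd ℂ) (h 0 1) + (-4)*h 0 2*(p 2:ℂ)*(p 2:ℂ)*(starRingEnd ℂ) (h 0 2) + (-4)*h 0 2*(p 2:ℂ)*(p 3:ℂ)*(starRingEnd ℂ) (h 0 3) + (-4)*h 0 3*(p 1:ℂ)*(p 3:ℂ)*(starRingEnd ℂ) (h 0 1) + (-4)*h 0 3*(p 2:ℂ)*(p 3:ℂ)*(starRingEnd ℂ) (h 0 2) + (-4)*h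 0 3*(p 3:ℂ)*(p 3:ℂ)*(starRingEnd ℂ) (h 0 3) + (6)*h 1 1*(p 1:ℂ)*(p 1:ℂ)*(starRingEnd ℂ) (h 1 1) + (6)*h 1 1*(p 1:ℂ)*(p 2:ℂ)*(starRingEnd ℂ) (h 1 2) + (6)*h 1 1*(p 1:ℂ)*(p 3:ℂ)*(starRingEnd ℂ) (h 1 3) + (2)*h 1 2*(p 1:ℂ)*(p 1:ℂ)*(starRingEnd ℂ) (h 1 2) + (6)*h 1 2*(p 1:ℂ)*(p 2:ℂ)*(starRingEnd ℂ) (h 1 1) + (2)*h 1 2*(p 1:ℂ)*(p 2:ℂ)*(starRingEnd ℂ) (h 2 2) + (2)*h 1 2*(p 1:ℂ)*(p 3:ℂ)*(starRingEnd ℂ) (h 2 3) + (6)*h 1 2*(p 2:ℂ)*(p 2:ℂ)*(starRingEnd ℂ) (h 1 2) + (6)*h 1 2*(p 2:ℂ)*(p 3:ℂ)*(starRingEnd ℂ) (h 1 3) + (2)*h 1 3*(p 1:ℂ)*(p 1:ℂ)*(starRingEnd ℂ) (h 1 3) + (2)*h 1 3*(p 1:ℂ)*(p 2:ℂ)*(starRingEnd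 ℂ) (h 2 3) + (6)*h 1 3*(p 1:ℂ)*(p 3:ℂ)*(starRingEnd ℂ) (h 1 1) + (2)*h 1 3*(p 1:ℂ)*(p 3:ℂ)*(starRingEnd ℂ) (h 3 3) + (6)*h 1 3*(p 2:ℂ)*(p 3:ℂ)*(starRingEnd ℂ) (h 1 2) + (6)*h 1 3*(p 3:ℂ)*(p 3:ℂ)*(starRingEnd ℂ) (h 1 3) + (2)*h 2 2*(p 1:ℂ)*(p 2:ℂ)*(starRingEnd ℂ) (h 1 2) + (2)*h 2 2*(p 2:ℂ)*(p 2:ℂ)*(starRingEnd ℂ) (h 2 2) + (2)*h 2 2*(p 2:ℂ)*(p 3:ℂ)*(starRingEnd ℂ) (h 2 3) + (2)*h 2 3*(p 1:ℂ)*(p 2:ℂ)*(starRingEnd ℂ) (h 1 3) + (2)*h 2 3*(p 1:ℂ)*(p 3:ℂ)*(starRingEnd ℂ) (h 1 2) + (2)*h 2 3*(p 2:ℂ)*(p 2:ℂ)*(starRingEnd ℂ) (h 2 3) + (2)*h 2 3*(p 2:ℂ)*(p 3:ℂ)*(starRingEnd ℂ) (h 2 2) + (2)*h 2 3*(p 2:ℂ)*(p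 3:ℂ)*(starRingEnd ℂ) (h 3 3) + (2)*h 2 3*(p 3:ℂ)*(p 3:ℂ)*(starRingEnd ℂ) (h 2 3) + (2)*h 3 3*(p 1:ℂ)*(p 3:ℂ)*(starRingEnd ℂ) (h 1 3) + (2)*h 3 3*(p 2:ℂ)*(p 3:ℂ)*(starRingEnd ℂ) (h 2 3) + (2)*h 3 3*(p 3:ℂ)*(p 3:ℂ)*(starRingEnd ℂ) (h 3 3)) * hq
    have keyz : ((p 0:ℂ)^2*(starRingEnd ℂ) (h 1 1) - (p 1:ℂ)*(p 0:ℂ)*(starRingEnd ℂ) (h 0 1) - (p 1:ℂ)*(p 0:ℂ)*(starRingEnd ℂ) (h 0 1) + (p 1:ℂ)*(p 1:ℂ)*(starRingEnd ℂ) (h 0 0)) * ((p 0:ℂ)^2*h 1 1 - (p 1:ℂ)*(p 0:ℂ)*h 0 1 - (p 1:ℂ)*(p 0:ℂ)*h 0 1 + (p 1:ℂ)*(p 1:ℂ)*h 0 0) + 2*((p 0:ℂ)^2*(starRingEnd ℂ) (h 1 2) - (p 1:ℂ)*(p 0:ℂ)*(starRingEnd ℂ) (h 0 2) - (p 2:ℂ)*(p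 0:ℂ)*(starRingEnd ℂ) (h 0 1) + (p 1:ℂ)*(p 2:ℂ)*(starRingEnd ℂ) (h 0 0)) * ((p 0:ℂ)^2*h 1 2 - (p 1:ℂ)*(p 0:ℂ)*h 0 2 - (p 2:ℂ)*(p 0:ℂ)*h 0 1 + (p 1:ℂ)*(p 2:ℂ)*h 0 0) + 2*((p 0:ℂ)^2*(starRingEnd ℂ) (h 1 3) - (p 1:ℂ)*(p 0:ℂ)*(starRingEnd ℂ) (h 0 3) - (p 3:ℂ)*(p 0:ℂ)*(starRingEnd ℂ) (h 0 1) + (p 1:ℂ)*(p 3:ℂ)*(starRingEnd ℂ) (h 0 0)) * ((p 0:ℂ)^2*h 1 3 - (p 1:ℂ)*(p 0:ℂ)*h 0 3 - (p 3:ℂ)*(p 0:ℂ)*h 0 1 + (p 1:ℂ)*(p 3:ℂ)*h 0 0) + ((p 0:ℂ)^2*(starRingEnd ℂ) (h 2 2) - (p 2:ℂ)*(p 0:ℂ)*(starRingEnd ℂ) (h 0 2) - (p 2:ℂ)*(p 0:ℂ)*(starRingEnd ℂ) (h 0 2) + (p 2:ℂ)*(p 2:ℂ)*(starRingEnd ℂ)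 (h 0 0)) * ((p 0:ℂ)^2*h 2 2 - (p 2:ℂ)*(p 0:ℂ)*h 0 2 - (p 2:ℂ)*(p 0:ℂ)*h 0 2 + (p 2:ℂ)*(p 2:ℂ)*h 0 0) + 2*((p 0:ℂ)^2*(starRingEnd ℂ) (h 2 3) - (p 2:ℂ)*(p 0:ℂ)*(starRingEnd ℂ) (h 0 3) - (p 3:ℂ)*(p 0:ℂ)*(starRingEnd ℂ) (h 0 2) + (p 2:ℂ)*(p 3:ℂ)*(starRingEnd ℂ) (h 0 0)) * ((p 0:ℂ)^2*h 2 3 - (p 2:ℂ)*(p 0:ℂ)*h 0 3 - (p 3:ℂ)*(p 0:ℂ)*h 0 2 + (p 2:ℂ)*(p 3:ℂ)*h 0 0) + ((p 0:ℂ)^2*(starRingEnd ℂ) (h 3 3) - (p 3:ℂ)*(p 0:ℂ)*(starRingEnd ℂ) (h 0 3) - (p 3:ℂ)*(p 0:ℂ)*(starRingEnd ℂ) (h 0 3) + (p 3:ℂ)*(p 3:ℂ)*(starRingEnd ℂ) (h 0 0)) * ((p 0:ℂ)^2*h 3 3 - (p 3:ℂ)*(p 0:ℂ)*h 0 3 -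 (p 3:ℂ)*(p 0:ℂ)*h 0 3 + (p 3:ℂ)*(p 3:ℂ)*h 0 0) = (0:ℂ) := by
      rw [← key, hz, mul_zero]
    have hns : ((Complex.normSq ((p 0:ℂ)^2*h 1 1 - (p 1:ℂ)*(p 0:ℂ)*h 0 1 - (p 1:ℂ)*(p 0:ℂ)*h 0 1 + (p 1:ℂ)*(p 1:ℂ)*h 0 0) + 2*Complex.normSq ((p 0:ℂ)^2*h 1 2 - (p 1:ℂ)*(p 0:ℂ)*h 0 2 - (p 2:ℂ)*(p 0:ℂ)*h 0 1 + (p 1:ℂ)*(p 2:ℂ)*h 0 0) + 2*Complex.normSq ((p 0:ℂ)^2*h 1 3 - (p 1:ℂ)*(p 0:ℂ)*h 0 3 - (p 3:ℂ)*(p 0:ℂ)*h 0 1 + (p 1:ℂ)*(p 3:ℂ)*h 0 0) + Complex.normSq ((p 0:ℂ)^2*h 2 2 - (p 2:ℂ)*(p 0:ℂ)*h 0 2 - (p 2:ℂ)*(p 0:ℂ)*h 0 2 + (p 2:ℂ)*(p 2:ℂ)*h 0 0) + 2*Complex.normSq ((p 0:ℂ)^2*h 2 3 - (p 2:ℂ)*(p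 0:ℂ)*h 0 3 - (p 3:ℂ)*(p 0:ℂ)*h 0 2 + (p 2:ℂ)*(p 3:ℂ)*h 0 0) + Complex.normSq ((p 0:ℂ)^2*h 3 3 - (p 3:ℂ)*(p 0:ℂ)*h 0 3 - (p 3:ℂ)*(p 0:ℂ)*h 0 3 + (p 3:ℂ)*(p 3:ℂ)*h 0 0) : ℝ) : ℂ) = 0 := by
      push_cast
      simp only [Complex.normSq_eq_conj_mul_self]
      simp only [map_add, map_sub, _root_.map_mul, map_pow, Complex.conj_ofReal]
      linear_combination keyz
    have hr : (Complex.normSq ((p 0:ℂ)^2*h 1 1 - (p 1:ℂ)*(p 0:ℂ)*h 0 1 - (p 1:ℂ)*(p 0:ℂ)*h 0 1 + (p 1:ℂ)*(p 1:ℂ)*h 0 0) + 2*Complex.normSq ((p 0:ℂ)^2*h 1 2 - (p 1:ℂ)*(p 0:ℂ)*h 0 2 - (p 2:ℂ)*(p 0:ℂ)*h 0 1 + (p 1:ℂ)*(p 2:ℂ)*h 0 0) + 2*Complex.normSq ((p 0:ℂ)^2*h 1 3 - (p 1:ℂ)*(p 0:ℂ)*h 0 3 - (p 3:ℂ)*(p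 0:ℂ)*h 0 1 + (p 1:ℂ)*(p 3:ℂ)*h 0 0) + Complex.normSq ((p 0:ℂ)^2*h 2 2 - (p 2:ℂ)*(p 0:ℂ)*h 0 2 - (p 2:ℂ)*(p 0:ℂ)*h 0 2 + (p 2:ℂ)*(p 2:ℂ)*h 0 0) + 2*Complex.normSq ((p 0:ℂ)^2*h 2 3 - (p 2:ℂ)*(p 0:ℂ)*h 0 3 - (p 3:ℂ)*(p 0:ℂ)*h 0 2 + (p 2:ℂ)*(p 3:ℂ)*h 0 0) + Complex.normSq ((p 0:ℂ)^2*h 3 3 - (p 3:ℂ)*(p 0:ℂ)*h 0 3 - (p 3:ℂ)*(p 0:ℂ)*h 0 3 + (p 3:ℂ)*(p 3:ℂ)*h 0 0) : ℝ) = 0 := by exact_mod_cast hns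
    have nn11 := Complex.normSq_nonneg ((p 0:ℂ)^2*h 1 1 - (p 1:ℂ)*(p 0:ℂ)*h 0 1 - (p 1:ℂ)*(p 0:ℂ)*h 0 1 + (p 1:ℂ)*(p 1:ℂ)*h 0 0)
    have nn12 := Complex.normSq_nonneg ((p 0:ℂ)^2*h 1 2 - (p 1:ℂ)*(p 0:ℂ)*h 0 2 - (p 2:ℂ)*(p 0:ℂ)*h 0 1 + (p 1:ℂ)*(p 2:ℂ)*h 0 0)
    have nn13 := Complex.normSq_nonneg ((p 0:ℂ)^2*h 1 3 - (p 1:ℂ)*(p 0:ℂ)*h 0 3 - (p 3:ℂ)*(p 0:ℂ)*h 0 1 + (p 1:ℂ)*(p 3:ℂ)*h 0 0)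
    have nn22 := Complex.normSq_nonneg ((p 0:ℂ)^2*h 2 2 - (p 2:ℂ)*(p 0:ℂ)*h 0 2 - (p 2:ℂ)*(p 0:ℂ)*h 0 2 + (p 2:ℂ)*(p 2:ℂ)*h 0 0)
    have nn23 := Complex.normSq_nonneg ((p 0:ℂ)^2*h 2 3 - (p 2:ℂ)*(p 0:ℂ)*h 0 3 - (p 3:ℂ)*(p 0:ℂ)*h 0 2 + (p 2:ℂ)*(p 3:ℂ)*h 0 0)
    have nn33 := Complex.normSq_nonneg ((p 0:ℂ)^2*h 3 3 - (p 3:ℂ)*(p 0:ℂ)*h 0 3 - (p 3:ℂ)*(p 0:ℂ)*h 0 3 + (p 3:ℂ)*(p 3:ℂ)*h 0 0)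
    have z11 : ((p 0:ℂ)^2*h 1 1 - (p 1:ℂ)*(p 0:ℂ)*h 0 1 - (p 1:ℂ)*(p 0:ℂ)*h 0 1 + (p 1:ℂ)*(p 1:ℂ)*h 0 0) = 0 := by
      apply Complex.normSq_eq_zero.mp
      linarith [hr, nn11, nn12, nn13, nn22, nn23, nn33]
    have z12 : ((p 0:ℂ)^2*h 1 2 - (p 1:ℂ)*(p 0:ℂ)*h 0 2 - (p 2:ℂ)*(p 0:ℂ)*h 0 1 + (p 1:ℂ)*(p 2:ℂ)*h 0 0) = 0 := by
      apply Complex.normSq_eq_zero.mp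
      linarith [hr, nn11, nn12, nn13, nn22, nn23, nn33]
    have z13 : ((p 0:ℂ)^2*h 1 3 - (p 1:ℂ)*(p 0:ℂ)*h 0 3 - (p 3:ℂ)*(p 0:ℂ)*h 0 1 + (p 1:ℂ)*(p 3:ℂ)*h 0 0) = 0 := by
      apply Complex.normSq_eq_zero.mp
      linarith [hr, nn11, nn12, nn13, nn22, nn23, nn33]
    have z22 : ((p 0:ℂ)^2*h 2 2 - (p 2:ℂ)*(p 0:ℂ)*h 0 2 - (p 2:ℂ)*(p 0:ℂ)*h 0 2 + (p 2:ℂ)*(p 2:ℂ)*h 0 0) = 0 := by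
      apply Complex.normSq_eq_zero.mp
      linarith [hr, nn11, nn12, nn13, nn22, nn23, nn33]
    have z23 : ((p 0:ℂ)^2*h 2 3 - (p 2:ℂ)*(p 0:ℂ)*h 0 3 - (p 3:ℂ)*(p 0:ℂ)*h 0 2 + (p 2:ℂ)*(p 3:ℂ)*h 0 0) = 0 := by
      apply Complex.normSq_eq_zero.mp
      linarith [hr, nn11, nn12, nn13, nn22, nn23, nn33]
    have z33 : ((p 0:ℂ)^2*h 3 3 - (p 3:ℂ)*(p 0:ℂ)*h 0 3 - (p 3:ℂ)*(p 0:ℂ)*h 0 3 + (p 3:ℂ)*(p 3:ℂ)*h 0 0) = 0 := by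
      apply Complex.normSq_eq_zero.mp
      linarith [hr, nn11, nn12, nn13, nn22, nn23, nn33]
    obtain ⟨c0, F0⟩ : ∃ c : ℂ, 2*(p 0:ℂ)*c = h 0 0 :=
      ⟨h 0 0/(2*(p 0:ℂ)), by field_simp⟩
    obtain ⟨c1, F1⟩ : ∃ c : ℂ, (p 0:ℂ)^2*c = (p 0:ℂ)*h 0 1 - h 0 0 * (p 1:ℂ)/2 :=
      ⟨((p 0:ℂ)*h 0 1 - h 0 0 * (p 1:ℂ)/2)/(p 0:ℂ)^2, by field_simp⟩
    obtain ⟨c2, F2⟩ : ∃ c : ℂ, (p 0:ℂ)^2*c = (p 0:ℂ)*h 0 2 - h 0 0 * (p 2:ℂ)/2 :=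
      ⟨((p 0:ℂ)*h 0 2 - h 0 0 * (p 2:ℂ)/2)/(p 0:ℂ)^2, by field_simp⟩
    obtain ⟨c3, F3⟩ : ∃ c : ℂ, (p 0:ℂ)^2*c = (p 0:ℂ)*h 0 3 - h 0 0 * (p 3:ℂ)/2 :=
      ⟨((p 0:ℂ)*h 0 3 - h 0 0 * (p 3:ℂ)/2)/(p 0:ℂ)^2, by field_simp⟩
    clear hz hpn0 key keyz hns hr nn11 nn12 nn13 nn22 nn23 nn33 htrans htr hsymm hp hp0 st0 st1 st2 st3
    refine ⟨![c0, c1, c2, c3], ?_, ?_⟩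
    · simp [gM, pc, Fin.sum_univ_four, Matrix.diagonal, Matrix.cons_val_zero,
        Matrix.cons_val_one, Matrix.head_cons, Matrix.cons_val_two, Matrix.tail_cons,
        Matrix.cons_val_three]
      have gg : (p 0:ℂ)^2*((p 0:ℂ)*c0 - (p 1:ℂ)*c1 - (p 2:ℂ)*c2 - (p 3:ℂ)*c3) = 0 := by
        linear_combination ((1/2)*(p 0:ℂ)*(p 0:ℂ)) * F0 + ((-1)*(p 1:ℂ)) * F1 + ((-1)*(p 2:ℂ)) * F2 + ((-1)*(p 3:ℂ)) * F3 + ((1)*(p 0:ℂ)) * t0 + ((-1/2)*h 0 0) * hq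
      have g2 := (mul_eq_zero.mp gg).resolve_left (pow_ne_zero 2 hP0)
      linear_combination g2
    · intro ρ σ
      fin_cases ρ <;> fin_cases σ
      · show h 0 0 = (p 0:ℂ) * c0 + (p 0:ℂ) * c0
        refine mul_left_cancel₀ (pow_ne_zero 2 hP0) ?_
        linear_combination ((-1)*(p 0:ℂ)*(p 0:ℂ)) * F0
      · show h 0 1 = (p 0:ℂ) * c1 + (p 1:ℂ) * c0
        refine mul_left_cancel₀ (pow_ne_zero 2 hP0) ?_
        linear_combination ((-1/2)*(p 0:ℂ)*(p 1:ℂ)) * F0 + ((-1)*(p 0:ℂ)) * F1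
      · show h 0 2 = (p 0:ℂ) * c2 + (p 2:ℂ) * c0
        refine mul_left_cancel₀ (pow_ne_zero 2 hP0) ?_
        linear_combination ((-1/2)*(p 0:ℂ)*(p 2:ℂ)) * F0 + ((-1)*(p 0:ℂ)) * F2
      · show h 0 3 = (p 0:ℂ) * c3 + (p 3:ℂ) * c0
        refine mul_left_cancel₀ (pow_ne_zero 2 hP0) ?_
        linear_combination ((-1/2)*(p 0:ℂ)*(p 3:ℂ)) * F0 + ((-1)*(p 0:ℂ)) * F3
      · show h 1 0 = (p 1:ℂ) * c0 + (p 0:ℂ) * c1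
        rw [hs 1 0]; refine mul_left_cancel₀ (pow_ne_zero 2 hP0) ?_
        linear_combination ((-1/2)*(p 0:ℂ)*(p 1:ℂ)) * F0 + ((-1)*(p 0:ℂ)) * F1
      · show h 1 1 = (p 1:ℂ) * c1 + (p 1:ℂ) * c1
        refine mul_left_cancel₀ (pow_ne_zero 2 hP0) ?_
        linear_combination ((-2)*(p 1:ℂ)) * F1 + ((1)) * z11
      · show h 1 2 = (p 1:ℂ) * c2 + (p 2:ℂ) * c1
        refine mul_left_cancel₀ (pow_ne_zero 2 hP0) ?_
        linear_combination ((-1)*(p 2:ℂ)) * F1 + ((-1)*(p 1:ℂ)) * F2 + ((1)) * z12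
      · show h 1 3 = (p 1:ℂ) * c3 + (p 3:ℂ) * c1
        refine mul_left_cancel₀ (pow_ne_zero 2 hP0) ?_
        linear_combination ((-1)*(p 3:ℂ)) * F1 + ((-1)*(p 1:ℂ)) * F3 + ((1)) * z13
      · show h 2 0 = (p 2:ℂ) * c0 + (p 0:ℂ) * c2
        rw [hs 2 0]; refine mul_left_cancel₀ (pow_ne_zero 2 hP0) ?_
        linear_combination ((-1/2)*(p 0:ℂ)*(p 2:ℂ)) * F0 + ((-1)*(p 0:ℂ)) * F2
      · show h 2 1 = (p 2:ℂ) * c1 + (p 1:ℂ) * c2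
        rw [hs 2 1]; refine mul_left_cancel₀ (pow_ne_zero 2 hP0) ?_
        linear_combination ((-1)*(p 2:ℂ)) * F1 + ((-1)*(p 1:ℂ)) * F2 + ((1)) * z12
      · show h 2 2 = (p 2:ℂ) * c2 + (p 2:ℂ) * c2
        refine mul_left_cancel₀ (pow_ne_zero 2 hP0) ?_
        linear_combination ((-2)*(p 2:ℂ)) * F2 + ((1)) * z22
      · show h 2 3 = (p 2:ℂ) * c3 + (p 3:ℂ) * c2
        refine mul_left_cancel₀ (pow_ne_zero 2 hP0) ?_
        linear_combination ((-1)*(p 3:ℂ)) * F2 + ((-1)*(p 2:ℂ)) * F3 + ((1)) * z23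
      · show h 3 0 = (p 3:ℂ) * c0 + (p 0:ℂ) * c3
        rw [hs 3 0]; refine mul_left_cancel₀ (pow_ne_zero 2 hP0) ?_
        linear_combination ((-1/2)*(p 0:ℂ)*(p 3:ℂ)) * F0 + ((-1)*(p 0:ℂ)) * F3
      · show h 3 1 = (p 3:ℂ) * c1 + (p 1:ℂ) * c3
        rw [hs 3 1]; refine mul_left_cancel₀ (pow_ne_zero 2 hP0) ?_
        linear_combination ((-1)*(p 3:ℂ)) * F1 + ((-1)*(p 1:ℂ)) * F3 + ((1)) * z13
      · show h 3 2 = (p 3:ℂ) * c2 + (p 2:ℂ) * c3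
        rw [hs 3 2]; refine mul_left_cancel₀ (pow_ne_zero 2 hP0) ?_
        linear_combination ((-1)*(p 3:ℂ)) * F2 + ((-1)*(p 2:ℂ)) * F3 + ((1)) * z23
      · show h 3 3 = (p 3:ℂ) * c3 + (p 3:ℂ) * c3
        refine mul_left_cancel₀ (pow_ne_zero 2 hP0) ?_
        linear_combination ((-2)*(p 3:ℂ)) * F3 + ((1)) * z33
  · rintro ⟨f, hf, hfh⟩
    have ef : (p 0:ℂ)*f 0 = (p 1:ℂ)*f 1 + (p 2:ℂ)*f 2 + (p 3:ℂ)*f 3 := by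
      simp [gM, pc, Fin.sum_univ_four, Matrix.diagonal] at hf
      linear_combination hf
    have sef := congrArg (starRingEnd ℂ) ef
    simp only [map_add, _root_.map_mul, Complex.conj_ofReal] at sef
    rw [hpn0]
    simp only [hfh, pc, map_add, _root_.map_mul, Complex.conj_ofReal]
    linear_combination ((2)*(p 0:ℂ)*(starRingEnd ℂ) (f 0) + (-2)*(p 1:ℂ)*(starRingEnd ℂ) (f 1) + (-2)*(p 2:ℂ)*(starRingEnd ℂ) (f 2) + (-2)*(p 3:ℂ)*(starRingEnd ℂ) (f 3)) * ef + ((2)*(f 0)*(starRingEnd ℂ) (f 0) + (-2)*(f 1)*(starRingEnd ℂ) (f 1) + (-2)*(f 2)*(starRingEnd ℂ) (f 2) + (-2)*(f 3)*(starRingEnd ℂ) (f 3)) * hq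
end
end

section
/- The set B(p) of complex symmetric Minkowski-traceless 4×4 matrices transverse to a fixed future-pointing lightlike vector p, quotiented by its subspace of matrices of zero Minkowski pseudo-norm (i.e. those of the form p_ρf_σ + p_σf_ρ with p^ρf_ρ = 0), is a complex vector space of dimension 2 on which the induced sesquilinear form (h,h') = conj(h^{μν})h'_{μν} is a positive definite inner product. -/
open Matrix
noncomputable section

def Bsub (p : Fin 4 → ℝ) : Submodule ℂ (Matrix (Fin 4) (Fin 4) ℂ) where
  carrier := {h | h.IsSymm ∧ IsTraceless h ∧ IsTransverse p h}
  zero_mem' := by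
    refine ⟨Matrix.isSymm_zero, ?_, fun ρ => ?_⟩ <;>
      simp [IsTraceless, IsTransverse]
  add_mem' := by
    rintro a b ⟨ha1, ha2, ha3⟩ ⟨hb1, hb2, hb3⟩
    refine ⟨ha1.add hb1, ?_, fun ρ => ?_⟩
    · simpa [IsTraceless, Matrix.add_apply, mul_add, Finset.sum_add_distrib] using
        congrArg₂ (· + ·) ha2 hb2
    · simpa [Matrix.add_apply, add_mul, Finset.sum_add_distrib] using
        congrArg₂ (· + ·) (ha3 ρ) (hb3 ρ)
  smul_mem' := by
    rintro c a ⟨ha1, ha2, ha3⟩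
    refine ⟨?_, ?_, fun ρ => ?_⟩
    · rw [Matrix.IsSymm, Matrix.transpose_smul, ha1]
    · have := congrArg (c * ·) ha2
      simpa [IsTraceless, Matrix.smul_apply, Finset.mul_sum, smul_eq_mul, mul_left_comm] using this
    · have := congrArg (c * ·) (ha3 ρ)
      simpa [Matrix.smul_apply, Finset.mul_sum, smul_eq_mul, mul_assoc, mul_left_comm] using this

def B0sub (p : Fin 4 → ℝ) : Submodule ℂ (Matrix (Fin 4) (Fin 4) ℂ) where
  carrier := {h | ∃ f : Fin 4 → ℂ,
    (∑ ρ, ∑ σ, gM ρ σ * pc p σ * f ρ) = 0 ∧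
    ∀ ρ σ, h ρ σ = pc p ρ * f σ + pc p σ * f ρ}
  zero_mem' := ⟨0, by simp, by simp⟩
  add_mem' := by
    rintro a b ⟨f, hf1, hf2⟩ ⟨f', hf'1, hf'2⟩
    refine ⟨f + f', ?_, fun ρ σ => ?_⟩
    · simpa [mul_add, Finset.sum_add_distrib] using congrArg₂ (· + ·) hf1 hf'1
    · simp [Matrix.add_apply, hf2 ρ σ, hf'2 ρ σ]; ring
  smul_mem' := by
    rintro c a ⟨f, hf1, hf2⟩
    refine ⟨c • f, ?_, fun ρ σ => ?_⟩
    · have := congrArg (c * ·) hf1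
      simpa [Pi.smul_apply, smul_eq_mul, Finset.mul_sum, mul_assoc, mul_left_comm] using this
    · simp [Matrix.smul_apply, hf2 ρ σ, Pi.smul_apply, smul_eq_mul]; ring

def pform (a b : Matrix (Fin 4) (Fin 4) ℂ) : ℂ := ∑ μ, ∑ ν, star (raise a μ ν) * b μ ν

/-! Conjugation `h ↦ O h Oᵀ` by a real orthogonal `O` commuting with `g` (an orthogonal map of
space) preserves `(·,·)` and carries `B(p)`, `B₀(p)` onto `B(Op)`, `B₀(Op)`, and a Householder
reflection of space moves `p` to `(p₀, p₀, 0, 0)`. For that vector transversality reads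
`h_{ρ0} = h_{ρ1}`, so with tracelessness every `h ∈ B` has the shape
`[[a,a,b,d],[a,a,b,d],[b,b,e,k],[d,d,k,-e]]`; then `(h, h) = 2 (|e|² + |k|²)` and `h ∈ B₀` iff
`e = k = 0`, which gives both the dimension and the definiteness. That `(h, ·)` vanishes on `B₀`
only needs `h` to be symmetric and transverse. -/

lemma gM_transpose : gMᵀ = gM := Matrix.diagonal_transpose _

lemma gM_conjTranspose : gMᴴ = gM := by
  simp only [gM, Matrix.diagonal_conjTranspose]
  congr 1
  ext i
  fin_cases i <;> simp

lemma isTraceless_iff (h : Matrix (Fin 4) (Fin 4) ℂ) : IsTraceless h ↔ (gM * h).trace = 0 := by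
  rw [IsTraceless, Matrix.trace, Finset.sum_comm]
  nth_rw 1 [← gM_transpose]
  simp [Matrix.mul_apply]

lemma isTransverse_iff (p : Fin 4 → ℝ) (h : Matrix (Fin 4) (Fin 4) ℂ) :
    IsTransverse p h ↔ h *ᵥ (gM *ᵥ pc p) = 0 := by
  simp only [IsTransverse, funext_iff, Matrix.mulVec, dotProduct, Finset.mul_sum, mul_assoc]
  rfl

lemma mem_B0sub_iff (p : Fin 4 → ℝ) (h : Matrix (Fin 4) (Fin 4) ℂ) :
    h ∈ B0sub p ↔ ∃ f, (gM *ᵥ pc p) ⬝ᵥ f = 0 ∧ h = vecMulVec (pc p) f + vecMulVec f (pc p) := by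
  simp only [B0sub, Matrix.mulVec, dotProduct, Finset.sum_mul, ← Matrix.ext_iff]
  simp [vecMulVec_apply, mul_comm]

lemma pform_eq_trace (a b : Matrix (Fin 4) (Fin 4) ℂ) : pform a b = ((raise a)ᴴ * b).trace := by
  rw [pform, Matrix.trace, Finset.sum_comm]
  simp [Matrix.mul_apply]

lemma pform_sub_right (a b b' : Matrix (Fin 4) (Fin 4) ℂ) :
    pform a (b - b') = pform a b - pform a b' := by
  simp [pform, mul_sub, Finset.sum_sub_distrib]

lemma pc_sub (x y : Fin 4 → ℝ) : pc (x - y) = pc x - pc y := by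
  ext i; simp [pc]

lemma pc_smul (a : ℝ) (x : Fin 4 → ℝ) : pc (a • x) = (a : ℂ) • pc x := by
  ext i; simp [pc]

lemma pc_dotProduct_pc (x y : Fin 4 → ℝ) : pc x ⬝ᵥ pc y = ((x ⬝ᵥ y : ℝ) : ℂ) := by
  simp [pc, dotProduct]

lemma star_gM_mulVec_pc (p : Fin 4 → ℝ) : star (gM *ᵥ pc p) = gM *ᵥ pc p := by
  ext i
  fin_cases i <;> simp [gM, pc, Matrix.mulVec_diagonal]

lemma gM_mulVec_pc_of_apply_zero {v : Fin 4 → ℝ} (hv : v 0 = 0) : gM *ᵥ pc v = -pc v := by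
  ext i
  fin_cases i <;> simp [gM, pc, hv, Matrix.mulVec_diagonal]

lemma pform_eq_zero_of_mem_B0sub {p : Fin 4 → ℝ} {a b : Matrix (Fin 4) (Fin 4) ℂ}
    (ha : a.IsSymm) (hat : IsTransverse p a) (hb : b ∈ B0sub p) : pform a b = 0 := by
  obtain ⟨f, -, rfl⟩ := (mem_B0sub_iff p b).mp hb
  rw [isTransverse_iff] at hat
  rw [pform_eq_trace]
  set A := (raise a)ᴴ
  have hAT : Aᵀ = A := by
    simp only [A, raise, ← Matrix.conjTranspose_transpose_eq_transpose_conjTranspose,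
      Matrix.transpose_mul, gM_transpose, ha.eq, Matrix.mul_assoc]
  have hAp : A *ᵥ pc p = 0 := by
    have : aᴴ *ᵥ (gM *ᵥ pc p) = 0 := by
      rw [← star_gM_mulVec_pc, ← Matrix.star_vecMul, ← Matrix.mulVec_transpose, ha.eq, hat,
        star_zero]
    simp only [A, raise, Matrix.conjTranspose_mul, gM_conjTranspose, ← Matrix.mulVec_mulVec,
      this, Matrix.mulVec_zero]
  rw [Matrix.mul_add, Matrix.trace_add, Matrix.mul_vecMulVec, Matrix.mul_vecMulVec,
    Matrix.trace_vecMulVec, Matrix.trace_vecMulVec, hAp, zero_dotProduct, zero_add,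
    dotProduct_comm, dotProduct_mulVec, ← Matrix.mulVec_transpose, hAT, hAp, zero_dotProduct]

lemma Matrix.mul_vecMulVec_mul_transpose {m n α : Type*} [Fintype n] [CommSemiring α]
    (O : Matrix m n α) (u v : n → α) : O * vecMulVec u v * Oᵀ = vecMulVec (O *ᵥ u) (O *ᵥ v) := by
  rw [Matrix.mul_vecMulVec, Matrix.vecMulVec_mul, Matrix.vecMul_transpose]

structure IsSpatialOrthogonal (O : Matrix (Fin 4) (Fin 4) ℂ) : Prop where
  transpose_mul_self : Oᵀ * O = 1
  commute_gM : Commute O gM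
  conjTranspose_eq : Oᴴ = Oᵀ

namespace IsSpatialOrthogonal

variable {O : Matrix (Fin 4) (Fin 4) ℂ} {p p' : Fin 4 → ℝ}

lemma mul_transpose_self (hO : IsSpatialOrthogonal O) : O * Oᵀ = 1 :=
  mul_eq_one_comm.mp hO.transpose_mul_self

lemma transpose (hO : IsSpatialOrthogonal O) : IsSpatialOrthogonal Oᵀ where
  transpose_mul_self := by rw [Matrix.transpose_transpose, hO.mul_transpose_self]
  commute_gM := calc
    Oᵀ * gM = (gM * O)ᵀ := by rw [Matrix.transpose_mul, gM_transpose]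
    _ = (O * gM)ᵀ := by rw [hO.commute_gM.eq]
    _ = gM * Oᵀ := by rw [Matrix.transpose_mul, gM_transpose]
  conjTranspose_eq := by
    rw [Matrix.conjTranspose_transpose_eq_transpose_conjTranspose, hO.conjTranspose_eq]

lemma transpose_mul_gM_mul (hO : IsSpatialOrthogonal O) : Oᵀ * gM * O = gM := by
  rw [Matrix.mul_assoc, ← hO.commute_gM.eq, ← Matrix.mul_assoc, hO.transpose_mul_self,
    Matrix.one_mul]

lemma transpose_mul_conj (hO : IsSpatialOrthogonal O) (X : Matrix (Fin 4) (Fin 4) ℂ) :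
    Oᵀ * (O * X * Oᵀ) * Oᵀᵀ = X := by
  simp only [Matrix.transpose_transpose, ← Matrix.mul_assoc, hO.transpose_mul_self,
    Matrix.one_mul]
  rw [Matrix.mul_assoc, hO.transpose_mul_self, Matrix.mul_one]

lemma mulVec_pc_symm (hO : IsSpatialOrthogonal O) (hp : O *ᵥ pc p = pc p') :
    Oᵀ *ᵥ pc p' = pc p := by
  rw [← hp, Matrix.mulVec_mulVec, hO.transpose_mul_self, Matrix.one_mulVec]

lemma trace_conj (hO : IsSpatialOrthogonal O) (X : Matrix (Fin 4) (Fin 4) ℂ) :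
    (O * X * Oᵀ).trace = X.trace := by
  rw [Matrix.trace_mul_cycle, hO.transpose_mul_self, Matrix.one_mul]

lemma gM_mul_conj (hO : IsSpatialOrthogonal O) (X : Matrix (Fin 4) (Fin 4) ℂ) :
    gM * (O * X * Oᵀ) = O * (gM * X) * Oᵀ := by
  simp only [← Matrix.mul_assoc, hO.commute_gM.eq]

lemma conj_mul_gM (hO : IsSpatialOrthogonal O) (X : Matrix (Fin 4) (Fin 4) ℂ) :
    O * X * Oᵀ * gM = O * (X * gM) * Oᵀ := by
  simp only [Matrix.mul_assoc, hO.transpose.commute_gM.eq]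

lemma conjTranspose_conj (hO : IsSpatialOrthogonal O) (X : Matrix (Fin 4) (Fin 4) ℂ) :
    (O * X * Oᵀ)ᴴ = O * Xᴴ * Oᵀ := by
  rw [Matrix.conjTranspose_mul, Matrix.conjTranspose_mul, hO.transpose.conjTranspose_eq,
    hO.conjTranspose_eq, Matrix.transpose_transpose, Matrix.mul_assoc]

lemma pnorm_conj (hO : IsSpatialOrthogonal O) (h : Matrix (Fin 4) (Fin 4) ℂ) :
    pnorm (O * h * Oᵀ) = pnorm h := by
  have hraise : raise (O * h * Oᵀ) = O * raise h * Oᵀ := by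
    rw [raise, hO.gM_mul_conj, hO.conj_mul_gM, raise]
  change pform _ _ = pform h h
  rw [pform_eq_trace, pform_eq_trace, hraise, hO.conjTranspose_conj,
    ← hO.trace_conj ((raise h)ᴴ * h)]
  simp only [Matrix.mul_assoc]
  rw [← Matrix.mul_assoc Oᵀ O, hO.transpose_mul_self, Matrix.one_mul]

lemma conj_mem_Bsub (hO : IsSpatialOrthogonal O) (hp : O *ᵥ pc p = pc p')
    {h : Matrix (Fin 4) (Fin 4) ℂ} (hh : h ∈ Bsub p) : O * h * Oᵀ ∈ Bsub p' := by
  obtain ⟨hsymm, htr, htv⟩ := hh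
  rw [isTraceless_iff] at htr
  rw [isTransverse_iff] at htv
  refine ⟨?_, ?_, ?_⟩
  · rw [Matrix.IsSymm, Matrix.transpose_mul, Matrix.transpose_mul, Matrix.transpose_transpose,
      hsymm.eq, Matrix.mul_assoc]
  · rw [isTraceless_iff, hO.gM_mul_conj, hO.trace_conj, htr]
  · rw [isTransverse_iff, ← hp, Matrix.mulVec_mulVec, Matrix.mulVec_mulVec,
      show O * h * Oᵀ * gM * O = O * h * (Oᵀ * gM * O) by simp only [Matrix.mul_assoc],
      hO.transpose_mul_gM_mul, ← Matrix.mulVec_mulVec, ← Matrix.mulVec_mulVec, htv,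
      Matrix.mulVec_zero]

lemma conj_mem_B0sub (hO : IsSpatialOrthogonal O) (hp : O *ᵥ pc p = pc p')
    {h : Matrix (Fin 4) (Fin 4) ℂ} (hh : h ∈ B0sub p) : O * h * Oᵀ ∈ B0sub p' := by
  obtain ⟨f, hf, rfl⟩ := (mem_B0sub_iff p h).mp hh
  refine (mem_B0sub_iff p' _).mpr ⟨O *ᵥ f, ?_, ?_⟩
  · rw [← hp, dotProduct_mulVec, ← Matrix.mulVec_transpose, Matrix.mulVec_mulVec,
      Matrix.mulVec_mulVec, hO.transpose_mul_gM_mul, hf]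
  · rw [Matrix.mul_add, Matrix.add_mul, Matrix.mul_vecMulVec_mul_transpose,
      Matrix.mul_vecMulVec_mul_transpose, hp]

def conjEquiv (hO : IsSpatialOrthogonal O) :
    Matrix (Fin 4) (Fin 4) ℂ ≃ₗ[ℂ] Matrix (Fin 4) (Fin 4) ℂ where
  toFun X := O * X * Oᵀ
  invFun X := Oᵀ * X * Oᵀᵀ
  map_add' X Y := by simp only [Matrix.mul_add, Matrix.add_mul]
  map_smul' c X := by simp
  left_inv := hO.transpose_mul_conj
  right_inv := hO.transpose.transpose_mul_conj

lemma conj_mem_iff {S : (Fin 4 → ℝ) → Submodule ℂ (Matrix (Fin 4) (Fin 4) ℂ)}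
    (hS : ∀ {O : Matrix (Fin 4) (Fin 4) ℂ} {p p' : Fin 4 → ℝ}, IsSpatialOrthogonal O →
      O *ᵥ pc p = pc p' → ∀ h ∈ S p, O * h * Oᵀ ∈ S p')
    (hO : IsSpatialOrthogonal O) (hp : O *ᵥ pc p = pc p') (h : Matrix (Fin 4) (Fin 4) ℂ) :
    O * h * Oᵀ ∈ S p' ↔ h ∈ S p :=
  ⟨fun hh => hO.transpose_mul_conj h ▸ hS hO.transpose (hO.mulVec_pc_symm hp) _ hh,
    hS hO hp h⟩

lemma map_conjEquiv {S : (Fin 4 → ℝ) → Submodule ℂ (Matrix (Fin 4) (Fin 4) ℂ)}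
    (hS : ∀ {O : Matrix (Fin 4) (Fin 4) ℂ} {p p' : Fin 4 → ℝ}, IsSpatialOrthogonal O →
      O *ᵥ pc p = pc p' → ∀ h ∈ S p, O * h * Oᵀ ∈ S p')
    (hO : IsSpatialOrthogonal O) (hp : O *ᵥ pc p = pc p') :
    (S p).map (hO.conjEquiv : Matrix (Fin 4) (Fin 4) ℂ →ₗ[ℂ] _) = S p' := by
  ext X
  rw [Submodule.mem_map_equiv, ← conj_mem_iff hS hO hp]
  exact iff_of_eq (congrArg (· ∈ S p') (hO.conjEquiv.apply_symm_apply X))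

end IsSpatialOrthogonal

theorem Submodule.finrank_quotient_comap_subtype_congr {R M N : Type*} [Ring R]
    [AddCommGroup M] [Module R M] [AddCommGroup N] [Module R N] (e : M ≃ₗ[R] N)
    {P Q : Submodule R M} {P' Q' : Submodule R N} (hP : P.map (e : M →ₗ[R] N) = P')
    (hQ : Q.map (e : M →ₗ[R] N) = Q') :
    Module.finrank R (P ⧸ Q.comap P.subtype) = Module.finrank R (P' ⧸ Q'.comap P'.subtype) := by
  subst hP hQ
  refine (Submodule.Quotient.equiv _ _ (e.submoduleMap P) ?_).finrank_eq
  ext ⟨x, hx⟩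
  simp

def householder (v : Fin 4 → ℝ) : Matrix (Fin 4) (Fin 4) ℂ :=
  1 - ((2 / (v ⬝ᵥ v) : ℝ) : ℂ) • vecMulVec (pc v) (pc v)

lemma isSpatialOrthogonal_householder {v : Fin 4 → ℝ} (hv : v 0 = 0) :
    IsSpatialOrthogonal (householder v) := by
  set c : ℂ := ((2 / (v ⬝ᵥ v) : ℝ) : ℂ)
  set V := vecMulVec (pc v) (pc v)
  -- also for `v = 0`, where `2 / 0 = 0` makes `c = 0`
  have hc : c * c * (pc v ⬝ᵥ pc v) = 2 * c := by
    have : 2 / (v ⬝ᵥ v) * (2 / (v ⬝ᵥ v)) * (v ⬝ᵥ v) = 2 * (2 / (v ⬝ᵥ v)) := by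
      rcases eq_or_ne (v ⬝ᵥ v) 0 with hr | hr
      · simp [hr]
      · field_simp
    simp only [c, pc_dotProduct_pc]
    exact_mod_cast this
  have hgv := gM_mulVec_pc_of_apply_zero hv
  have hgV : gM * V = -V := by rw [Matrix.mul_vecMulVec, hgv, Matrix.neg_vecMulVec]
  have hVg : V * gM = -V := by
    rw [Matrix.vecMulVec_mul, ← Matrix.mulVec_transpose, gM_transpose, hgv, Matrix.vecMulVec_neg]
  refine ⟨?_, ?_, ?_⟩
  · rw [householder, Matrix.transpose_sub, Matrix.transpose_one, Matrix.transpose_smul,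
      Matrix.transpose_vecMulVec]
    calc (1 - c • V) * (1 - c • V) = 1 - (2 * c - c * c * (pc v ⬝ᵥ pc v)) • V := by
          simp only [sub_mul, mul_sub, Matrix.one_mul, Matrix.mul_one, Matrix.smul_mul,
            Matrix.mul_smul, V, Matrix.vecMulVec_mul_vecMulVec, Matrix.vecMulVec_smul, smul_smul]
          module
      _ = 1 := by rw [hc, sub_self, zero_smul, sub_zero]
  · change (1 - c • V) * gM = gM * (1 - c • V)
    simp only [sub_mul, mul_sub, Matrix.one_mul, Matrix.mul_one, Matrix.smul_mul, Matrix.mul_smul,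
      hgV, hVg]
  · ext i j
    simp [householder, vecMulVec_apply, pc, Matrix.one_apply, apply_ite]

lemma householder_mulVec_pc {x y : Fin 4 → ℝ} (hxy : x ⬝ᵥ x = y ⬝ᵥ y) :
    householder (x - y) *ᵥ pc x = pc y := by
  set v := x - y with hv
  have hreflect : (2 / (v ⬝ᵥ v) * (v ⬝ᵥ x)) • v = v := by
    rcases eq_or_ne (v ⬝ᵥ v) 0 with hr | hr
    · rw [dotProduct_self_eq_zero.mp hr, smul_zero]
    · have hvv : v ⬝ᵥ v = 2 * (v ⬝ᵥ x) := by
        simp only [v, sub_dotProduct, dotProduct_sub, dotProduct_comm y x]; linarith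
      have hvx : v ⬝ᵥ x ≠ 0 := right_ne_zero_of_mul (hvv ▸ hr)
      rw [hvv, show 2 / (2 * v ⬝ᵥ x) * v ⬝ᵥ x = 1 by field_simp, one_smul]
  rw [householder, Matrix.sub_mulVec, Matrix.one_mulVec, Matrix.smul_mulVec,
    Matrix.vecMulVec_mulVec, op_smul_eq_smul, smul_smul, pc_dotProduct_pc,
    ← Complex.ofReal_mul, ← pc_smul, hreflect, ← pc_sub, hv, sub_sub_cancel]

def stdForm (a b d e k : ℂ) : Matrix (Fin 4) (Fin 4) ℂ :=
  !![a, a, b, d; a, a, b, d; b, b, e, k; d, d, k, -e]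

lemma pnorm_stdForm (a b d e k : ℂ) :
    pnorm (stdForm a b d e k) = ((2 * (Complex.normSq e + Complex.normSq k) : ℝ) : ℂ) := by
  simp [stdForm, pnorm, raise, gM, Fin.sum_univ_four, Matrix.diagonal_mul, Matrix.mul_diagonal,
    Complex.normSq_eq_conj_mul_self]
  ring

lemma stdForm_mem_Bsub (c : ℝ) (a b d e k : ℂ) : stdForm a b d e k ∈ Bsub ![c, c, 0, 0] := by
  refine ⟨?_, ?_, fun ρ => ?_⟩
  · ext i j
    fin_cases i <;> fin_cases j <;> rfl
  · simp [stdForm, IsTraceless, Fin.sum_univ_four, gM, Matrix.diagonal_apply]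
  · fin_cases ρ <;> simp [stdForm, Fin.sum_univ_four, gM, pc, Matrix.diagonal_apply]

section Standard

variable {c : ℝ}

lemma eq_stdForm_of_mem_Bsub (hc : c ≠ 0) {h : Matrix (Fin 4) (Fin 4) ℂ}
    (hh : h ∈ Bsub ![c, c, 0, 0]) : h = stdForm (h 0 0) (h 0 2) (h 0 3) (h 2 2) (h 2 3) := by
  obtain ⟨hs, htr, htv⟩ := hh
  have h1 : ∀ ρ, h ρ 1 = h ρ 0 := fun ρ => by
    have := htv ρ
    simp [Fin.sum_univ_four, gM, pc, Matrix.diagonal_apply] at this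
    exact mul_right_cancel₀ (Complex.ofReal_ne_zero.mpr hc) (by linear_combination -this)
  simp [IsTraceless, Fin.sum_univ_four, gM, Matrix.diagonal_apply] at htr
  have hs' := hs.apply
  ext i j
  fin_cases i <;> fin_cases j <;> simp [stdForm] <;> grind

lemma stdForm_mem_B0sub_iff (hc : c ≠ 0) (a b d e k : ℂ) :
    stdForm a b d e k ∈ B0sub ![c, c, 0, 0] ↔ e = 0 ∧ k = 0 := by
  have hc' : (c : ℂ) ≠ 0 := Complex.ofReal_ne_zero.mpr hc
  constructor
  · rintro ⟨f, -, hf⟩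
    have h22 := hf 2 2
    have h23 := hf 2 3
    simp [stdForm, pc] at h22 h23
    exact ⟨h22, h23⟩
  · rintro ⟨rfl, rfl⟩
    refine ⟨![a / (2 * c), a / (2 * c), b / c, d / c], ?_, fun ρ σ => ?_⟩
    · simp [Fin.sum_univ_four, gM, pc, Matrix.diagonal_apply]
    · fin_cases ρ <;> fin_cases σ <;> simp [stdForm, pc] <;> field_simp <;> ring

lemma pnorm_of_mem_Bsub_std (hc : c ≠ 0) {h : Matrix (Fin 4) (Fin 4) ℂ}
    (hh : h ∈ Bsub ![c, c, 0, 0]) :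
    pnorm h = ((2 * (Complex.normSq (h 2 2) + Complex.normSq (h 2 3)) : ℝ) : ℂ) := by
  conv_lhs => rw [eq_stdForm_of_mem_Bsub hc hh]
  exact pnorm_stdForm ..

lemma mem_B0sub_std_iff (hc : c ≠ 0) {h : Matrix (Fin 4) (Fin 4) ℂ}
    (hh : h ∈ Bsub ![c, c, 0, 0]) : h ∈ B0sub ![c, c, 0, 0] ↔ h 2 2 = 0 ∧ h 2 3 = 0 := by
  conv_lhs => rw [eq_stdForm_of_mem_Bsub hc hh]
  exact stdForm_mem_B0sub_iff hc ..

lemma finrank_quotient_std (hc : c ≠ 0) :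
    Module.finrank ℂ (↥(Bsub ![c, c, 0, 0]) ⧸
      Submodule.comap (Bsub ![c, c, 0, 0]).subtype (B0sub ![c, c, 0, 0])) = 2 := by
  let Λ : ↥(Bsub ![c, c, 0, 0]) →ₗ[ℂ] ℂ × ℂ :=
    (Matrix.entryLinearMap ℂ ℂ 2 2).prod (Matrix.entryLinearMap ℂ ℂ 2 3) ∘ₗ
      (Bsub ![c, c, 0, 0]).subtype
  have hker : Submodule.comap (Bsub ![c, c, 0, 0]).subtype (B0sub ![c, c, 0, 0]) =
      LinearMap.ker Λ := by
    ext ⟨h, hh⟩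
    simp [Λ, mem_B0sub_std_iff hc hh, Prod.ext_iff]
  have hsurj : Function.Surjective Λ := fun ⟨e, k⟩ =>
    ⟨⟨_, stdForm_mem_Bsub c 0 0 0 e k⟩, by simp [Λ, stdForm]⟩
  rw [hker, (Λ.quotKerEquivOfSurjective hsurj).finrank_eq, Module.finrank_prod,
    Module.finrank_self]

end Standard

lemma dotProduct_self_eq_of_minkR_self_eq_zero {p : Fin 4 → ℝ} (hp : minkR p p = 0) :
    p ⬝ᵥ p = ![p 0, p 0, 0, 0] ⬝ᵥ ![p 0, p 0, 0, 0] := by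
  simp only [minkR] at hp
  simp [dotProduct, Fin.sum_univ_four]
  linarith

/-- The space `B(p)` of symmetric Minkowski-traceless matrices transverse to a fixed
future-pointing lightlike `p`, modulo its zero-norm subspace `B₀(p)`, is a complex
vector space of dimension 2, and the sesquilinear form `(h,h') = conj(h^{μν}) h'_{μν}`
descends to a positive definite inner product on the quotient. -/
theorem statement6 (p : Fin 4 → ℝ) (hp : minkR p p = 0) (hp0 : 0 < p 0) :
    Module.finrank ℂ (↥(Bsub p) ⧸ Submodule.comap (Bsub p).subtype (B0sub p)) = 2 ∧
    (∀ a b b' : Matrix (Fin 4) (Fin 4) ℂ, a ∈ Bsub p → b ∈ Bsub p → b' ∈ Bsub p →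
      b - b' ∈ B0sub p → pform a b = pform a b') ∧
    (∀ h ∈ Bsub p, (pnorm h).im = 0 ∧ 0 ≤ (pnorm h).re) ∧
    (∀ h ∈ Bsub p, (pnorm h = 0 ↔ h ∈ B0sub p)) := by
  obtain ⟨O, hO, hOp⟩ : ∃ O, IsSpatialOrthogonal O ∧ O *ᵥ pc p = pc ![p 0, p 0, 0, 0] :=
    ⟨_, isSpatialOrthogonal_householder (by simp),
      householder_mulVec_pc (dotProduct_self_eq_of_minkR_self_eq_zero hp)⟩
  have hc : p 0 ≠ 0 := hp0.ne'
  refine ⟨?_, fun a b b' ha _ _ hbb' => ?_, fun h hh => ?_, fun h hh => ?_⟩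
  · rw [Submodule.finrank_quotient_comap_subtype_congr hO.conjEquiv
      (hO.map_conjEquiv (fun hO hp _ => hO.conj_mem_Bsub hp) hOp)
      (hO.map_conjEquiv (fun hO hp _ => hO.conj_mem_B0sub hp) hOp)]
    exact finrank_quotient_std hc
  · rw [← sub_eq_zero, ← pform_sub_right]
    exact pform_eq_zero_of_mem_B0sub ha.1 ha.2.2 hbb'
  · rw [← hO.pnorm_conj, pnorm_of_mem_Bsub_std hc (hO.conj_mem_Bsub hOp hh), Complex.ofReal_im,
      Complex.ofReal_re]
    exact ⟨rfl, mul_nonneg zero_le_two (add_nonneg (Complex.normSq_nonneg _)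
      (Complex.normSq_nonneg _))⟩
  · rw [← hO.pnorm_conj, pnorm_of_mem_Bsub_std hc (hO.conj_mem_Bsub hOp hh),
      ← hO.conj_mem_iff (fun hO hp _ => hO.conj_mem_B0sub hp) hOp,
      mem_B0sub_std_iff hc (hO.conj_mem_Bsub hOp hh), Complex.ofReal_eq_zero]
    simp [add_eq_zero_iff_of_nonneg, Complex.normSq_nonneg]
end
end

section
/- Homotopy reduction lemma: Let V = V₁ ⊕ V₀, Q : V → V with Q² = 0 in block form [[Q₁₁, Q₁₀],[Q₀₁, 0]], Q̃ with Q̃² = 0 in block form [[Q̃₁₁, Q̃₁₀],[Q̃₀₁, 0]], Y = QQ̃ + Q̃Q block-diagonal with Y₁ invertible. Then for every Φ ∈ Ker(Q) there exists ψ ∈ V such that Φ - Qψ ∈ V₀ (i.e. the V₁-component of Φ - Qψ vanishes). Consequently every cohomology class in Ker(Q)/Im(Q) has a representative in V₀. -/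
/-- Homotopy reduction lemma: with `Q, Q̃` of square zero on `V = V₁ ⊕ V₀`, both with
vanishing `V₀ → V₀` block, and `Y = QQ̃ + Q̃Q` block diagonal with invertible `Y₁`,
every `Φ ∈ Ker(Q)` can be written `Φ = Qψ + Φ̃` with `Φ̃ ∈ V₀`; hence every class of
`Ker(Q)/Im(Q)` has a representative in `V₀`. -/
theorem statement15 (V₁ V₀ : Type*) [AddCommGroup V₁] [Module ℂ V₁]
    [AddCommGroup V₀] [Module ℂ V₀]
    (Q11 : V₁ →ₗ[ℂ] V₁) (Q10 : V₀ →ₗ[ℂ] V₁) (Q01 : V₁ →ₗ[ℂ] V₀)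
    (Qt11 : V₁ →ₗ[ℂ] V₁) (Qt10 : V₀ →ₗ[ℂ] V₁) (Qt01 : V₁ →ₗ[ℂ] V₀)
    (Q Qt : V₁ × V₀ →ₗ[ℂ] V₁ × V₀)
    (hQblock : ∀ x : V₁ × V₀, Q x = (Q11 x.1 + Q10 x.2, Q01 x.1))
    (hQtblock : ∀ x : V₁ × V₀, Qt x = (Qt11 x.1 + Qt10 x.2, Qt01 x.1))
    (hQ2 : Q ∘ₗ Q = 0) (hQt2 : Qt ∘ₗ Qt = 0)
    (Y1 : V₁ →ₗ[ℂ] V₁) (Y0 : V₀ →ₗ[ℂ] V₀)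
    (hYblock : ∀ x : V₁ × V₀, (Q ∘ₗ Qt + Qt ∘ₗ Q) x = (Y1 x.1, Y0 x.2))
    (hY1inv : Function.Bijective Y1) :
    ∀ Φ : V₁ × V₀, Q Φ = 0 → ∃ ψ : V₁ × V₀, (Φ - Q ψ).1 = 0 := by
  intro Φ hΦ
  have hQ2' : ∀ x, Q (Q x) = 0 := fun x => congrFun (congrArg DFunLike.coe hQ2) x
  have hQt2' : ∀ x, Qt (Qt x) = 0 := fun x => congrFun (congrArg DFunLike.coe hQt2) x
  set e := LinearEquiv.ofBijective Y1 hY1inv with he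
  have hgY : ∀ a, Y1 (e.symm a) = a := fun a => e.apply_symm_apply a
  -- commutation of Q with Y
  have hcommQ : ∀ x : V₁ × V₀, Q (Y1 x.1, Y0 x.2) = (Y1 (Q x).1, Y0 (Q x).2) := by
    intro x
    have h1 : Q ((Q ∘ₗ Qt + Qt ∘ₗ Q) x) = (Q ∘ₗ Qt + Qt ∘ₗ Q) (Q x) := by
      simp only [LinearMap.add_apply, LinearMap.comp_apply, map_add, hQ2', hQt2']
      simp
    rw [hYblock, hYblock] at h1
    exact h1
  have hcommQt : ∀ x : V₁ × V₀, Qt (Y1 x.1, Y0 x.2) = (Y1 (Qt x).1, Y0 (Qt x).2) := by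
    intro x
    have h1 : Qt ((Q ∘ₗ Qt + Qt ∘ₗ Q) x) = (Q ∘ₗ Qt + Qt ∘ₗ Q) (Qt x) := by
      simp only [LinearMap.add_apply, LinearMap.comp_apply, map_add, hQ2', hQt2']
      simp
    rw [hYblock, hYblock] at h1
    exact h1
  -- component commutations
  have hc1 : ∀ a : V₁, Q11 (Y1 a) = Y1 (Q11 a) := by
    intro a
    have := hcommQ (a, 0)
    rw [hQblock, hQblock] at this
    simpa using congrArg Prod.fst this
  have hc2 : ∀ b : V₀, Q10 (Y0 b) = Y1 (Q10 b) := by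
    intro b
    have := hcommQ (0, b)
    rw [hQblock, hQblock] at this
    simpa using congrArg Prod.fst this
  have hc3 : ∀ a : V₁, Qt01 (Y1 a) = Y0 (Qt01 a) := by
    intro a
    have := hcommQt (a, 0)
    rw [hQtblock, hQtblock] at this
    simpa using congrArg Prod.snd this
  -- the key identity: Q (Qt Φ) = (Y1 Φ.1, Y0 Φ.2)
  set Ψ := Qt Φ with hΨ
  have hkey : Q Ψ = (Y1 Φ.1, Y0 Φ.2) := by
    have := hYblock Φ
    simp only [LinearMap.add_apply, LinearMap.comp_apply, hΦ, map_zero, add_zero] at this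
    exact this
  have hΨ2 : Ψ.2 = Qt01 Φ.1 := by rw [hΨ, hQtblock]
  have hkey1 : Q11 Ψ.1 + Q10 Ψ.2 = Y1 Φ.1 := by
    have := congrArg Prod.fst hkey
    rwa [hQblock] at this
  refine ⟨(e.symm Ψ.1, Qt01 (e.symm Φ.1)), ?_⟩
  have hgoal : Q11 (e.symm Ψ.1) + Q10 (Qt01 (e.symm Φ.1)) = Φ.1 := by
    apply hY1inv.1
    rw [map_add, ← hc1, hgY, ← hc2, ← hc3, hgY, ← hΨ2, hkey1]
  rw [hQblock]
  simp [hgoal]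
end
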